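/- In the setting d1 = 1 with f1 = U0 X1 + U1 X2 generic (i.e. A = ℤ[U0,U1,V0,...,V_{d2}]), the iterated Sylvester form h_0(f1,f2) (obtained by applying sylv_{(0,0)}(f1, −) iteratively δ = d2 − 1 times starting from sylv_{(0,0)}(f1,f2)) equals the resultant Res(f1,f2) up to sign. -/
import Mathlib


open MvPolynomial

noncomputable section

/-- The Sylvester matrix of two binary forms of degrees `d1`, `d2` with coefficient
sequences `U` (so `f1 = Σ U i · X1^{d1−i} X2^i`) and `V`. -/
def sylMatrix {A : Type*} [CommRing A] (d1 d2 : ℕ) (U V : ℕ → A) :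
    Matrix (Fin (d1 + d2)) (Fin (d1 + d2)) A :=
  Matrix.of fun i j =>
    if (j : ℕ) < d2 then
      (if (j : ℕ) ≤ i ∧ (i : ℕ) ≤ (j : ℕ) + d1 then U ((i : ℕ) - j) else 0)
    else
      (if (j : ℕ) - d2 ≤ i ∧ (i : ℕ) ≤ (j : ℕ) - d2 + d2 then
        V ((i : ℕ) - ((j : ℕ) - d2)) else 0)

/-- The resultant `Res(f1,f2)` as the determinant of the Sylvester matrix. -/
def res {A : Type*} [CommRing A] (d1 d2 : ℕ) (U V : ℕ → A) : A :=
  (sylMatrix d1 d2 U V).det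

/-- `isSylv00 n m f g s` : `s = det` of a decomposition `f = X1·a1 + X2·a2`,
`g = X1·b1 + X2·b2` with `a1, a2` homogeneous of degree `n` and `b1, b2` of degree `m`. -/
def isSylv00 {A : Type*} [CommRing A] (n m : ℕ) (f g s : MvPolynomial (Fin 2) A) : Prop :=
  ∃ a1 a2 b1 b2 : MvPolynomial (Fin 2) A,
    a1.IsHomogeneous n ∧ a2.IsHomogeneous n ∧
    b1.IsHomogeneous m ∧ b2.IsHomogeneous m ∧
    f = X 0 * a1 + X 1 * a2 ∧ g = X 0 * b1 + X 1 * b2 ∧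
    s = a1 * b2 - a2 * b1

/-! ### Auxiliary lemmas -/

/-- A polynomial homogeneous of degree `0` is a constant. -/
lemma eq_C_of_isHomogeneous_zero {σ R : Type*} [CommRing R] {p : MvPolynomial σ R}
    (hp : p.IsHomogeneous 0) : p = C (constantCoeff p) := by
  classical
  ext m
  by_cases hm : m = 0
  · subst hm
    simp [constantCoeff_eq]
  · rw [hp.coeff_eq_zero (by rwa [Ne, Finsupp.degree_eq_zero_iff]), coeff_C,
      if_neg (fun h => hm h.symm)]

/-- The square matrix of size `d+1` which is the `d1 = 1` Sylvester matrix, reindexed. -/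
def sylNN {A : Type*} [CommRing A] (d : ℕ) (U V : ℕ → A) :
    Matrix (Fin (d+1)) (Fin (d+1)) A :=
  Matrix.of fun i j =>
    if (j : ℕ) < d then
      (if (j : ℕ) ≤ i ∧ (i : ℕ) ≤ (j : ℕ) + 1 then U ((i : ℕ) - j) else 0)
    else V i

lemma sylNN_det {A : Type*} [CommRing A] (d : ℕ) (U : ℕ → A) : ∀ V : ℕ → A,
    (sylNN d U V).det = ∑ j ∈ Finset.range (d+1), V j * U 0 ^ j * (- U 1) ^ (d - j) := by
  induction d with
  | zero => intro V; simp [sylNN, Matrix.det_fin_one]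
  | succ d ih =>
    intro V
    rw [Matrix.det_succ_row_zero, Fin.sum_univ_succ]
    have h00 : sylNN (d+1) U V 0 0 = U 0 := by simp [sylNN]
    have hsub : (sylNN (d+1) U V).submatrix Fin.succ (Fin.succAbove 0)
        = sylNN d U (fun n => V (n+1)) := by
      ext k l
      simp only [Matrix.submatrix_apply, Fin.succAbove_zero, sylNN, Matrix.of_apply,
        Fin.val_succ]
      split_ifs with h1 h2 h3 h4 h5 <;> first
        | rfl
        | omega
        | (congr 1; omega)
    have hrest : ∀ j : Fin (d+1), j ≠ Fin.last d →
        (-1 : A) ^ ((j.succ : Fin (d+2)) : ℕ) * sylNN (d+1) U V 0 j.succ *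
          ((sylNN (d+1) U V).submatrix Fin.succ (Fin.succAbove j.succ)).det = 0 := by
      intro j hj
      have hjd : (j : ℕ) < d := Fin.val_lt_last hj
      have hz : sylNN (d+1) U V 0 j.succ = 0 := by
        have hc : ((j.succ : Fin (d+2)) : ℕ) = (j : ℕ) + 1 := rfl
        simp only [sylNN, Matrix.of_apply, hc, Fin.val_zero]
        rw [if_pos (by omega), if_neg (by omega)]
      rw [hz]; ring
    rw [Finset.sum_eq_single (Fin.last d) (fun j _ hj => hrest j hj) (by simp)]
    have hlastval : sylNN (d+1) U V 0 (Fin.last d).succ = V 0 := by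
      have hc : (((Fin.last d).succ : Fin (d+2)) : ℕ) = d + 1 := rfl
      simp [sylNN, hc]
    have hlastdet :
        ((sylNN (d+1) U V).submatrix Fin.succ (Fin.succAbove (Fin.last d).succ)).det
          = U 1 ^ (d+1) := by
      have hsa : (Fin.last d).succ = Fin.last (d+1) := rfl
      have htri : ((sylNN (d+1) U V).submatrix Fin.succ
          (Fin.succAbove (Fin.last (d+1)))).BlockTriangular id := by
        intro k l hkl
        simp only [Matrix.submatrix_apply, Fin.succAbove_last, sylNN, Matrix.of_apply,
          Fin.val_succ, Fin.coe_castSucc]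
        rw [if_pos l.isLt, if_neg (by simp only [id] at hkl; omega)]
      rw [hsa, Matrix.det_of_upperTriangular htri]
      have hdiag : ∀ k : Fin (d+1),
          ((sylNN (d+1) U V).submatrix Fin.succ (Fin.succAbove (Fin.last (d+1)))) k k
            = U 1 := by
        intro k
        simp only [Matrix.submatrix_apply, Fin.succAbove_last, sylNN, Matrix.of_apply,
          Fin.val_succ, Fin.coe_castSucc]
        rw [if_pos k.isLt, if_pos ⟨by omega, by omega⟩]
        congr 1; omega
      rw [Finset.prod_congr rfl (fun k _ => hdiag k), Finset.prod_const]
      simp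
    rw [h00, hsub, hlastval, hlastdet, ih]
    have hcast : (((Fin.last d).succ : Fin (d+2)) : ℕ) = d + 1 := rfl
    rw [hcast]
    have expand : ∑ j ∈ Finset.range (d+1+1), V j * U 0 ^ j * (-U 1) ^ (d+1-j)
        = (∑ j ∈ Finset.range (d+1), V (j+1) * U 0 ^ (j+1) * (-U 1) ^ (d-j))
            + V 0 * (-U 1) ^ (d+1) := by
      rw [Finset.sum_range_succ']
      congr 1
      · refine Finset.sum_congr rfl fun j hj => ?_
        have : d + 1 - (j + 1) = d - j := by omega
        rw [this]
      · simp
    rw [expand]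
    have t1 : (U 0 : A) * ∑ j ∈ Finset.range (d+1), V (j+1) * U 0 ^ j * (-U 1) ^ (d-j)
        = ∑ j ∈ Finset.range (d+1), V (j+1) * U 0 ^ (j+1) * (-U 1) ^ (d-j) := by
      rw [Finset.mul_sum]; exact Finset.sum_congr rfl fun j _ => by ring
    have t2 : ((-1:A)) ^ (d+1) * V 0 * U 1 ^ (d+1) = V 0 * (-U 1) ^ (d+1) := by
      rw [neg_pow]; ring
    simp only [Fin.val_zero, pow_zero, one_mul]
    rw [t1, t2]

/-- Formula for the resultant in the case `d1 = 1`. -/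
lemma res_one_eq {A : Type*} [CommRing A] (d : ℕ) (U V : ℕ → A) :
    res 1 d U V = ∑ j ∈ Finset.range (d+1), V j * U 0 ^ j * (- U 1) ^ (d - j) := by
  rw [res, ← sylNN_det]
  rw [← Matrix.det_submatrix_equiv_self (finCongr (Nat.add_comm d 1)) (sylMatrix 1 d U V)]
  congr 1
  ext i j
  have hi : ((finCongr (Nat.add_comm d 1) i : Fin (1+d)) : ℕ) = (i : ℕ) := by simp
  have hj : ((finCongr (Nat.add_comm d 1) j : Fin (1+d)) : ℕ) = (j : ℕ) := by simp
  simp only [Matrix.submatrix_apply, sylMatrix, sylNN, Matrix.of_apply, hi, hj]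
  by_cases hjd : (j : ℕ) < d
  · rw [if_pos hjd, if_pos hjd]
  · rw [if_neg hjd, if_neg hjd]
    have hjeq : (j : ℕ) = d := by have := j.isLt; omega
    rw [if_pos ⟨by omega, by omega⟩]
    congr 1
    omega

/-- generic case, `d1 = 1`. Over `A = ℤ[U0,U1,V0,...,V_{d2}]`
(realized as `MvPolynomial (Fin (d2+3)) ℤ`), with `f1 = U0 X1 + U1 X2` and
`f2 = V0 X1^{d2} + ... + V_{d2} X2^{d2}`, the iterated Sylvester form `h_0` — obtained by
applying `sylv_{(0,0)}(f1, −)` iteratively `δ = d2 − 1` times starting from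
`sylv_{(0,0)}(f1,f2)` — equals the resultant `Res(f1,f2)` up to sign. -/
theorem stmt12 (d2 : ℕ) (hd2 : 2 ≤ d2)
    (U V : ℕ → MvPolynomial (Fin (d2 + 3)) ℤ)
    (hU : ∀ i : ℕ, (hi : i ≤ 1) → U i = X ⟨i, by omega⟩)
    (hV : ∀ j : ℕ, (hj : j ≤ d2) → V j = X ⟨j + 2, by omega⟩)
    (f1 f2 : MvPolynomial (Fin 2) (MvPolynomial (Fin (d2 + 3)) ℤ))
    (hf1 : f1 = C (U 0) * X 0 + C (U 1) * X 1)
    (hf2 : f2 = ∑ j ∈ Finset.range (d2 + 1), C (V j) * X 0 ^ (d2 - j) * X 1 ^ j)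
    (h : ℕ → MvPolynomial (Fin 2) (MvPolynomial (Fin (d2 + 3)) ℤ))
    (htop : isSylv00 0 (d2 - 1) f1 f2 (h (d2 - 1)))
    (hstep : ∀ ν < d2 - 1, isSylv00 0 ν f1 (h (ν + 1)) (h ν)) :
    h 0 = C (res 1 d2 U V) ∨ h 0 = - C (res 1 d2 U V) := by
  -- the common projective zero of `f1` is `pt := ![-(U 1), U 0]`;
  -- each Sylvester step preserves the value at `pt`
  have key : ∀ (m : ℕ) (g s : MvPolynomial (Fin 2) (MvPolynomial (Fin (d2 + 3)) ℤ)),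
      isSylv00 0 m f1 g s → eval ![-(U 1), U 0] s = eval ![-(U 1), U 0] g := by
    rintro m g s ⟨a1, a2, b1, b2, ha1, ha2, hb1, hb2, hf, hg, hs⟩
    obtain ⟨c1, rfl⟩ : ∃ c, a1 = C c := ⟨_, eq_C_of_isHomogeneous_zero ha1⟩
    obtain ⟨c2, rfl⟩ : ∃ c, a2 = C c := ⟨_, eq_C_of_isHomogeneous_zero ha2⟩
    have e1 : c1 = U 0 := by
      have := congrArg (eval ![(1:MvPolynomial (Fin (d2 + 3)) ℤ), 0]) (hf.symm.trans hf1)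
      simpa using this
    have e2 : c2 = U 1 := by
      have := congrArg (eval ![(0:MvPolynomial (Fin (d2 + 3)) ℤ), 1]) (hf.symm.trans hf1)
      simpa using this
    subst e1 e2
    rw [hs, hg]
    simp only [map_sub, map_add, map_mul, eval_C, eval_X,
      Matrix.cons_val_zero, Matrix.cons_val_one, Matrix.head_cons]
    ring
  -- iterate down the chain
  have chain : ∀ k, k ≤ d2 - 1 →
      eval ![-(U 1), U 0] (h (d2 - 1 - k)) = eval ![-(U 1), U 0] f2 := by
    intro k
    induction k with
    | zero => intro _; simpa using key _ _ _ htop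
    | succ k ihk =>
      intro hk
      have hν : d2 - 1 - (k+1) < d2 - 1 := by omega
      have hkey := key _ _ _ (hstep _ hν)
      have heq : d2 - 1 - (k+1) + 1 = d2 - 1 - k := by omega
      rw [heq] at hkey
      rw [hkey]
      exact ihk (by omega)
  have h0eval : eval ![-(U 1), U 0] (h 0) = eval ![-(U 1), U 0] f2 := by
    have := chain (d2 - 1) le_rfl
    rwa [Nat.sub_self] at this
  -- `h 0` is a constant
  obtain ⟨a1, a2, b1, b2, ha1, ha2, hb1, hb2, hf, hg, hs⟩ := hstep 0 (by omega)
  obtain ⟨ca1, ha1'⟩ : ∃ c, a1 = C c := ⟨_, eq_C_of_isHomogeneous_zero ha1⟩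
  obtain ⟨ca2, ha2'⟩ : ∃ c, a2 = C c := ⟨_, eq_C_of_isHomogeneous_zero ha2⟩
  obtain ⟨cb1, hb1'⟩ : ∃ c, b1 = C c := ⟨_, eq_C_of_isHomogeneous_zero hb1⟩
  obtain ⟨cb2, hb2'⟩ : ∃ c, b2 = C c := ⟨_, eq_C_of_isHomogeneous_zero hb2⟩
  have hconst : h 0 = C (ca1 * cb2 - ca2 * cb1) := by
    rw [hs, ha1', ha2', hb1', hb2', ← C_mul, ← C_mul, ← C_sub]
  have hCval : h 0 = C (eval ![-(U 1), U 0] (h 0)) := by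
    rw [hconst, eval_C]
  -- evaluate `f2` at `pt`
  have hf2eval : eval ![-(U 1), U 0] f2
      = ∑ j ∈ Finset.range (d2+1), V j * U 0 ^ j * (- U 1) ^ (d2 - j) := by
    rw [hf2, map_sum]
    refine Finset.sum_congr rfl fun j hj => ?_
    simp only [map_mul, map_pow, eval_C, eval_X,
      Matrix.cons_val_zero, Matrix.cons_val_one, Matrix.head_cons]
    ring
  left
  rw [hCval, h0eval, hf2eval, res_one_eq]

end
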